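/- The map T preserves the multiset of edges: if T(π, σ) = (π′, σ′), then the multiset of pairs {(i, π(i)) : i ∈ dom π} ∪ {(i, σ(i)) : i ∈ dom σ} equals {(i, π′(i)) : i ∈ dom π′} ∪ {(i, σ′(i)) : i ∈ dom σ′}. Consequently, for any matrix A, ∏ a_{i,π(i)} · ∏ a_{i,σ(i)} = ∏ a_{i,π′(i)} · ∏ a_{i,σ′(i)}. -/

import Mathlib

/- We work with `n + 2` people of each sex (so the number of people is at least 2),
men and women both indexed by `Fin (n+2)`; man `0` is "Mr. 1" and man `Fin.last (n+1)`
is "Mr. n", and similarly for women.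

A pair `(π, σ)` of total permutations of `Fin (n+2)` encodes an element of one of the
sets `A(n)`, `B(n)`, `C(n)` of pairs (marriage matching, affair matching) of
Zeilberger's proof, via dummy values at the unused points:
* `A(n)`: `π` is the marriage matching of all men to all women, and the affair
  matching `{2,…,n-1} → {2',…,(n-1)'}` is encoded by a permutation `σ` fixing the
  endpoints `0` and `last`.
* `B(n)`: the marriage matching `{1,…,n-1} → {1',…,(n-1)'}` is encoded by `π` with the
  dummy value `π last = last`, and the affair matching `{2,…,n} → {2',…,n'}` by `σ`
  with dummy value `σ 0 = 0`.
* `C(n)`: the marriage matching `{1,…,n-1} → {2',…,n'}` is encoded by `π` with dummy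
  value `π last = 0`, and the affair matching `{2,…,n} → {1',…,(n-1)'}` by `σ` with
  dummy value `σ 0 = last`. -/

/-- A pair (marriages, affairs) of permutations. -/
abbrev PairPerm (n : ℕ) := Equiv.Perm (Fin (n + 2)) × Equiv.Perm (Fin (n + 2))

/-- The last index (Mr./Ms. `n`). -/
def lastF (n : ℕ) : Fin (n + 2) := Fin.last (n + 1)

/-- The middle indices `{2,…,n-1}` (people having affairs in `A(n)`). -/
def middleF (n : ℕ) : Finset (Fin (n + 2)) := (Finset.univ.erase 0).erase (lastF n)

/-- Membership in `A(n)`: the affair permutation fixes the two endpoints. -/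
def InA {n : ℕ} (p : PairPerm n) : Prop := p.2 0 = 0 ∧ p.2 (lastF n) = lastF n

/-- Membership in `B(n)`: dummy marriage `n ↦ n'`, dummy affair `1 ↦ 1'`. -/
def InB {n : ℕ} (p : PairPerm n) : Prop := p.1 (lastF n) = lastF n ∧ p.2 0 = 0

/-- Membership in `C(n)`: dummy marriage `n ↦ 1'`, dummy affair `1 ↦ n'`. -/
def InC {n : ℕ} (p : PairPerm n) : Prop := p.1 (lastF n) = 0 ∧ p.2 0 = lastF n

/-- The alternating chain of men: `m 0 = n`, and `m (k+1)` is the lover of the wife of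
`m k` (wife: apply `π`; lover: apply `σ⁻¹`). -/
def chainM {n : ℕ} (p : PairPerm n) : ℕ → Fin (n + 2)
  | 0 => lastF n
  | k + 1 => p.2.symm (p.1 (chainM p k))

/-- The alternating chain of women: `w k` is the wife of `m k`. -/
def chainW {n : ℕ} (p : PairPerm n) (k : ℕ) : Fin (n + 2) := p.1 (chainM p k)

/-- `TStep p q` says that `q` is obtained from `p` by Zeilberger's map `T`: along the
alternating chain `m 0 = n, w 0, m 1, w 1, …` of `p`, which terminates at the first
woman `w (r-1) ∈ {1', n'}`, marriages `(m k, w k)` become affairs and affairs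
`(m (k+1), w k)` become marriages; everything off the chain is unchanged, and the
dummy values are set according to whether the chain ended at `1'` or at `n'`. -/
def TStep {n : ℕ} (p q : PairPerm n) : Prop :=
  ∃ r : ℕ, 1 ≤ r ∧
    (∀ k, k + 1 < r → chainW p k ≠ 0 ∧ chainW p k ≠ lastF n) ∧
    (chainW p (r - 1) = 0 ∨ chainW p (r - 1) = lastF n) ∧
    (∀ i, (∀ k, k < r → i ≠ chainM p k) → q.1 i = p.1 i) ∧
    (∀ i, i ≠ 0 → (∀ k, k < r → i ≠ chainM p k) → q.2 i = p.2 i) ∧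
    (∀ k, k + 1 < r → q.1 (chainM p (k + 1)) = chainW p k) ∧
    q.1 (lastF n) = chainW p (r - 1) ∧
    (∀ k, k < r → q.2 (chainM p k) = chainW p k) ∧
    q.2 0 = (if chainW p (r - 1) = 0 then lastF n else 0)

/-! Let `S` be the set of men on the alternating chain of `(π, σ)`, which contains `n` and,
because `σ` fixes `1'`, never reaches `1`. Off `S` every man keeps his wife and his lover; on `S`
his wife becomes his lover and (for `m ≠ n`) his lover becomes his wife. The men that lack a
partner are `n` (no marriage after `T`) and `1` (no affair before or after), so the edges match
up man by man. Hence both identities are one statement about products over men in a commutative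
monoid: multisets under `+`, ring elements under `*`. -/

open Finset

@[to_additive]
theorem Finset.prod_erase_eq_prod_ite {ι M : Type*} [CommMonoid M] [DecidableEq ι]
    (s : Finset ι) (a : ι) (f : ι → M) :
    ∏ i ∈ s.erase a, f i = ∏ i ∈ s, if i = a then 1 else f i := by
  rw [← filter_ne', prod_filter]
  exact prod_congr rfl fun i _ => by by_cases h : i = a <;> simp [h]

@[to_additive]
theorem prod_mul_prod_eq_of_exchange {α β M : Type*} [Fintype α] [DecidableEq α] [CommMonoid M]
    (e : α → β → M) {S : Finset α} {a b : α} (ha : a ∈ S) (hb : b ∉ S) {f g f' g' : α → β}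
    (hg'S : ∀ i ∈ S, g' i = f i) (hf'S : ∀ i ∈ S, i ≠ a → f' i = g i)
    (hf' : ∀ i ∉ S, f' i = f i) (hg' : ∀ i ∉ S, i ≠ b → g' i = g i) :
    (∏ i, e i (f i)) * ∏ i ∈ (univ.erase b).erase a, e i (g i) =
      (∏ i ∈ univ.erase a, e i (f' i)) * ∏ i ∈ univ.erase b, e i (g' i) := by
  simp only [prod_erase_eq_prod_ite, ← prod_mul_distrib]
  refine prod_congr rfl fun i _ => ?_
  by_cases hiS : i ∈ S
  · have hib : i ≠ b := fun h => hb (h ▸ hiS)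
    by_cases hia : i = a
    · subst hia; simp [hib, hg'S i hiS]
    · simp [hia, hib, hg'S i hiS, hf'S i hiS hia, mul_comm]
  · have hia : i ≠ a := fun h => hiS (h ▸ ha)
    by_cases hib : i = b
    · subst hib; simp [hia, hf' i hiS]
    · simp [hia, hib, hf' i hiS, hg' i hiS hib]

theorem Finset.val_map_eq_sum_singleton {ι γ : Type*} (s : Finset ι) (f : ι → γ) :
    s.val.map f = ∑ i ∈ s, {f i} := by
  rw [sum_eq_multiset_sum, ← Multiset.sum_map_singleton (s.val.map f), Multiset.map_map]
  rfl

theorem chainM_succ_ne_zero {n : ℕ} {p : PairPerm n} (hp : p.2 0 = 0) {k : ℕ}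
    (hk : chainW p k ≠ 0) : chainM p (k + 1) ≠ 0 := by
  intro h0
  rw [chainM, Equiv.symm_apply_eq, hp] at h0
  exact hk h0

theorem TStep.exists_exchange {n : ℕ} {p q : PairPerm n} (hp : p.2 0 = 0) (h : TStep p q) :
    ∃ S : Finset (Fin (n + 2)), lastF n ∈ S ∧ 0 ∉ S ∧
      (∀ i ∈ S, q.2 i = p.1 i) ∧ (∀ i ∈ S, i ≠ lastF n → q.1 i = p.2 i) ∧
      (∀ i ∉ S, q.1 i = p.1 i) ∧ (∀ i ∉ S, i ≠ 0 → q.2 i = p.2 i) := by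
  obtain ⟨r, hr, hne, -, hq1off, hq2off, hq1chain, -, hq2chain, -⟩ := h
  have off_chain : ∀ {i}, i ∉ (range r).image (chainM p) → ∀ k < r, i ≠ chainM p k :=
    fun hi k hk hik => hi (mem_image.2 ⟨k, mem_range.2 hk, hik.symm⟩)
  refine ⟨(range r).image (chainM p), mem_image.2 ⟨0, mem_range.2 hr, rfl⟩, ?_, ?_, ?_,
    fun i hi => hq1off i (off_chain hi), fun i hi hi0 => hq2off i hi0 (off_chain hi)⟩
  · simp only [mem_image, mem_range, not_exists, not_and]
    rintro (_ | k) hk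
    · exact Fin.last_pos.ne'
    · exact chainM_succ_ne_zero hp (hne k hk).1
  · simp only [mem_image, mem_range]
    rintro _ ⟨k, hk, rfl⟩
    exact hq2chain k hk
  · simp only [mem_image, mem_range]
    rintro _ ⟨(_ | k), hk, rfl⟩ hi
    · exact absurd rfl hi
    · rw [hq1chain k hk, chainM, chainW, Equiv.apply_symm_apply]

theorem T_preserves_edges {n : ℕ} (p q : PairPerm n) (hp : InA p) (h : TStep p q) :
    (Finset.univ.val.map (fun i => (i, p.1 i)) +
        (middleF n).val.map (fun i => (i, p.2 i)) =
      (Finset.univ.erase (lastF n)).val.map (fun i => (i, q.1 i)) +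
        (Finset.univ.erase 0).val.map (fun i => (i, q.2 i))) ∧
    ∀ (R : Type) [CommRing R] (A : Fin (n + 2) → Fin (n + 2) → R),
      (∏ i, A i (p.1 i)) * (∏ i ∈ middleF n, A i (p.2 i)) =
        (∏ i ∈ Finset.univ.erase (lastF n), A i (q.1 i)) *
          ∏ i ∈ Finset.univ.erase 0, A i (q.2 i) := by
  obtain ⟨S, hlast, h0, hq2S, hq1S, hq1, hq2⟩ := h.exists_exchange hp.1
  refine ⟨?_, fun R _ A => prod_mul_prod_eq_of_exchange A hlast h0 hq2S hq1S hq1 hq2⟩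
  simp only [val_map_eq_sum_singleton]
  exact sum_add_sum_eq_of_exchange (fun i j => {(i, j)}) hlast h0 hq2S hq1S hq1 hq2
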